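/- Let A be a finite-dimensional central simple algebra over a field k that is a unital subalgebra of a k-algebra B, and let C = C_B(A) be the centralizer of A in B. Then: (i) the multiplication map A ⊗_k C → B is an isomorphism of k-algebras; (ii) the map I ↦ A·I gives a bijective correspondence between two-sided ideals of C and two-sided ideals of B; (iii) Z(C) = Z(B), i.e. the center of C equals the center of B. -/

import Mathlib

/-!
`A` is a simple `A ⊗ Aᵐᵒᵖ`-module whose endomorphisms are the scalars `k`, so Jacobson density
and a dimension count make `A ⊗ Aᵐᵒᵖ → End_k A` an isomorphism. Hence every `k`-linear
endomorphism of `A` has the form `x ↦ ∑ aⱼ x a'ⱼ`, and the same formula extends it to `B`.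
Extending `x ↦ φᵢ(x) • 1` for the coordinate functionals `φᵢ` of a basis `eᵢ` of `A` gives
right `C`-linear maps `πᵢ : B → C` that preserve two-sided ideals, satisfy `b = ∑ eᵢ πᵢ(b)`,
and map the ideal generated by `A·I` into `I`. Thus `A ⊗ C ≃ B`, `J ↦ J ∩ C` inverts
`I ↦ A·I`, and `B` is generated by `A` and `C`, whence `Z(C) = Z(B)`.
-/

open TensorProduct

section

variable {A : Type*} [Ring A]

attribute [local instance] instModuleTensorProductMop

section

variable {R : Type*} [CommRing R] [Algebra R A]

private lemma tmul_smul_eq_mul_mul (a : A) (b : Aᵐᵒᵖ) (x : A) :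
    (a ⊗ₜ[R] b) • x = a * x * b.unop := by
  simp [TensorProduct.Algebra.smul_def, mul_assoc]

/-- Submodules of `A` over `A ⊗ Aᵐᵒᵖ` are two-sided ideals. -/
theorem IsSimpleRing.isSimpleModule_tensorProduct_mop [IsSimpleRing A] :
    IsSimpleModule (A ⊗[R] Aᵐᵒᵖ) A := by
  refine (isSimpleModule_iff _ _).mpr ⟨fun P => ?_⟩
  let J : TwoSidedIdeal A := .mk' P P.zero_mem P.add_mem P.neg_mem
    (fun {x y} hy => by simpa [tmul_smul_eq_mul_mul] using P.smul_mem (x ⊗ₜ[R] 1) hy)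
    (fun {x y} hx => by simpa [tmul_smul_eq_mul_mul] using P.smul_mem (1 ⊗ₜ[R] .op y) hx)
  have hJ (x : A) : x ∈ J ↔ x ∈ P := TwoSidedIdeal.mem_mk' ..
  rcases IsSimpleRing.simple.eq_bot_or_eq_top J with h | h
  · exact .inl <| (Submodule.eq_bot_iff P).mpr fun x hx => by
      simpa [h] using (hJ x).mpr hx
  · exact .inr <| Submodule.eq_top_iff'.mpr fun x => (hJ x).mp (h ▸ trivial)

theorem Algebra.IsCentral.exists_eq_smul_of_tensorProduct_mop_linear [Algebra.IsCentral R A]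
    (g : Module.End (A ⊗[R] Aᵐᵒᵖ) A) : ∃ c : R, ∀ x, g x = c • x := by
  have hleft (a : A) : g a = a * g 1 := by
    simpa [tmul_smul_eq_mul_mul] using g.map_smul (a ⊗ₜ[R] 1) 1
  have hright (a : A) : g a = g 1 * a := by
    simpa [tmul_smul_eq_mul_mul] using g.map_smul (1 ⊗ₜ[R] .op a) 1
  obtain ⟨c, hc⟩ := (Algebra.IsCentral.mem_center_iff R).mp <|
    Subalgebra.mem_center_iff.mpr fun a => (hleft a).symm.trans (hright a)
  exact ⟨c, fun x => by rw [hright, hc, Algebra.smul_def]⟩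

end

variable {k : Type*} [Field k] [Algebra k A]

theorem AlgHom.mulLeftRight_surjective [FiniteDimensional k A] [Algebra.IsCentral k A]
    [IsSimpleRing A] : Function.Surjective (AlgHom.mulLeftRight k A) := by
  classical
  have := IsSimpleRing.isSimpleModule_tensorProduct_mop (R := k) (A := A)
  intro f
  let F : Module.End (Module.End (A ⊗[k] Aᵐᵒᵖ) A) A :=
    { toFun := f
      map_add' := f.map_add
      map_smul' := fun g x => by
        obtain ⟨c, hc⟩ := Algebra.IsCentral.exists_eq_smul_of_tensorProduct_mop_linear g
        simp [Module.End.smul_def, hc] }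
  let e := Module.finBasis k A
  obtain ⟨r, hr⟩ := jacobson_density F (Finset.univ.image e)
  exact ⟨r, e.ext fun i => (hr (e i) (by simp)).symm⟩

instance IsAzumaya.of_isCentral_of_isSimpleRing [FiniteDimensional k A] [Algebra.IsCentral k A]
    [IsSimpleRing A] : IsAzumaya k A where
  bij := by
    refine ⟨?_, AlgHom.mulLeftRight_surjective⟩
    refine (LinearMap.injective_iff_surjective_of_finrank_eq_finrank
      (f := (AlgHom.mulLeftRight k A).toLinearMap) ?_).mpr AlgHom.mulLeftRight_surjective
    rw [Module.finrank_tensorProduct, Module.finrank_linearMap, MulOpposite.finrank]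

end

namespace Subalgebra

section CommRing

variable {R B : Type*} [CommRing R] [Ring B] [Algebra R B] (A : Subalgebra R B) [IsAzumaya R A]

/-- `End_R A ≃ A ⊗ Aᵐᵒᵖ` followed by `a ⊗ a' ↦ (y ↦ a y a')`: the endomorphism
`x ↦ ∑ aⱼ x a'ⱼ` of `A` goes to `y ↦ ∑ aⱼ y a'ⱼ` on `B`. -/
noncomputable def extendEnd : Module.End R A →ₐ[R] Module.End R B :=
  ((AlgHom.mulLeftRight R B).comp (Algebra.TensorProduct.map A.val (AlgHom.op A.val))).comp
    (AlgEquiv.ofBijective _ (IsAzumaya.bij (R := R) (A := A))).symm.toAlgHom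

lemma extendEnd_mulLeftRight (u : A ⊗[R] Aᵐᵒᵖ) :
    A.extendEnd (AlgHom.mulLeftRight R A u) =
      AlgHom.mulLeftRight R B (Algebra.TensorProduct.map A.val (AlgHom.op A.val) u) := by
  simp [extendEnd]

lemma extendEnd_apply_coe (f : Module.End R A) (a : A) : A.extendEnd f a = f a := by
  obtain ⟨u, rfl⟩ := IsAzumaya.bij.2 f
  rw [extendEnd_mulLeftRight]
  induction u using TensorProduct.induction_on with
  | zero => simp
  | tmul x y => simp
  | add x y hx hy => simp [hx, hy]

lemma extendEnd_apply_mul_of_mem_centralizer (f : Module.End R A) (b : B) {c : B}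
    (hc : c ∈ centralizer R (A : Set B)) : A.extendEnd f (b * c) = A.extendEnd f b * c := by
  obtain ⟨u, rfl⟩ := IsAzumaya.bij.2 f
  rw [extendEnd_mulLeftRight]
  induction u using TensorProduct.induction_on with
  | zero => simp
  | tmul x y =>
    simp [mul_assoc, (mem_centralizer_iff R).mp hc _ (y.unop).2]
  | add x y hx hy => simp [hx, hy, add_mul]

lemma extendEnd_apply_mem (f : Module.End R A) {J : TwoSidedIdeal B} {b : B} (hb : b ∈ J) :
    A.extendEnd f b ∈ J := by
  obtain ⟨u, rfl⟩ := IsAzumaya.bij.2 f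
  rw [extendEnd_mulLeftRight]
  induction u using TensorProduct.induction_on with
  | zero => simp
  | tmul x y => simpa using J.mul_mem_right _ _ (J.mul_mem_left _ _ hb)
  | add x y hx hy => simpa using J.add_mem hx hy

lemma extendEnd_mulLeft (a : A) :
    A.extendEnd (LinearMap.mulLeft R a) = LinearMap.mulLeft R (a : B) := by
  have : LinearMap.mulLeft R a = AlgHom.mulLeftRight R A (a ⊗ₜ 1) := by ext; simp
  rw [this, extendEnd_mulLeftRight]
  ext; simp

lemma extendEnd_mulRight (a : A) :
    A.extendEnd (LinearMap.mulRight R a) = LinearMap.mulRight R (a : B) := by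
  have : LinearMap.mulRight R a = AlgHom.mulLeftRight R A (1 ⊗ₜ .op a) := by ext; simp
  rw [this, extendEnd_mulLeftRight]
  ext; simp

lemma extendEnd_smulRight_one_mem_centralizer (φ : Module.Dual R A) (b : B) :
    A.extendEnd (φ.smulRight 1) b ∈ centralizer R (A : Set B) := by
  refine (mem_centralizer_iff R).mpr fun a ha => ?_
  have h : LinearMap.mulLeft R (⟨a, ha⟩ : A) * φ.smulRight 1 =
      LinearMap.mulRight R ⟨a, ha⟩ * φ.smulRight 1 := by
    ext x; simp
  simpa [extendEnd_mulLeft, extendEnd_mulRight] using congr(A.extendEnd $h b)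

noncomputable def centralizerProj (φ : Module.Dual R A) : B →ₗ[R] centralizer R (A : Set B) :=
  LinearMap.codRestrict (centralizer R (A : Set B)).toSubmodule (A.extendEnd (φ.smulRight 1))
    (A.extendEnd_smulRight_one_mem_centralizer φ)

lemma coe_centralizerProj_apply (φ : Module.Dual R A) (b : B) :
    (A.centralizerProj φ b : B) = A.extendEnd (φ.smulRight 1) b := rfl

lemma centralizerProj_apply_coe (φ : Module.Dual R A) (a : A) :
    A.centralizerProj φ a = algebraMap R _ (φ a) := by
  ext; simp [coe_centralizerProj_apply, extendEnd_apply_coe, Algebra.algebraMap_eq_smul_one]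

lemma centralizerProj_mul (φ : Module.Dual R A) (b : B) (c : centralizer R (A : Set B)) :
    A.centralizerProj φ (b * c) = A.centralizerProj φ b * c :=
  Subtype.ext <| A.extendEnd_apply_mul_of_mem_centralizer _ b c.2

lemma centralizerProj_apply_centralizer (φ : Module.Dual R A) (c : centralizer R (A : Set B)) :
    A.centralizerProj φ c = φ 1 • c := by
  have h := A.centralizerProj_mul φ 1 c
  rw [one_mul, show (1 : B) = (1 : A) from rfl, centralizerProj_apply_coe] at h
  rw [h, Algebra.smul_def]

lemma coe_centralizerProj_mem (φ : Module.Dual R A) {J : TwoSidedIdeal B} {b : B} (hb : b ∈ J) :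
    (A.centralizerProj φ b : B) ∈ J :=
  A.extendEnd_apply_mem _ hb

lemma sum_mul_centralizerProj {ι : Type*} [Fintype ι] (e : Module.Basis ι R A) (b : B) :
    ∑ i, (e i : B) * A.centralizerProj (e.coord i) b = b := by
  have h : ∑ i, LinearMap.mulLeft R (e i) * (e.coord i).smulRight 1 = 1 := by
    ext x
    simp
  simpa [coe_centralizerProj_apply, extendEnd_mulLeft] using congr(A.extendEnd $h b)

end CommRing

section Field

variable {k B : Type*} [Field k] [Ring B] [Algebra k B] (A : Subalgebra k B) [IsAzumaya k A]

theorem bijective_lift_centralizer :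
    Function.Bijective (Algebra.TensorProduct.lift A.val (centralizer k (A : Set B)).val
      fun a c => (mem_centralizer_iff k).mp c.2 a a.2) := by
  let e := Module.finBasis k A
  let g : B →ₗ[k] A ⊗[k] centralizer k (A : Set B) :=
    ∑ i, (TensorProduct.mk k A _ (e i)).comp (A.centralizerProj (e.coord i))
  have hg (b : B) : g b = ∑ i, e i ⊗ₜ A.centralizerProj (e.coord i) b := by simp [g]
  refine Function.bijective_iff_has_inverse.mpr ⟨g, fun x => ?_, fun b => ?_⟩
  · induction x using TensorProduct.induction_on with
    | zero => simp
    | tmul a c =>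
      calc g (a * c) = ∑ i, e i ⊗ₜ (e.coord i a • c) := by
            simp [hg, centralizerProj_mul, centralizerProj_apply_coe, Algebra.smul_def]
        _ = (∑ i, e.coord i a • e i) ⊗ₜ c := by simp only [sum_tmul, smul_tmul]
        _ = a ⊗ₜ c := by congr 1; exact e.sum_repr a
    | add x y hx hy => rw [map_add, map_add, hx, hy]
  · rw [hg, map_sum]
    exact A.sum_mul_centralizerProj e b

theorem map_center_centralizer :
    (center k (centralizer k (A : Set B))).map (centralizer k (A : Set B)).val = center k B := by
  let e := Module.finBasis k A
  apply le_antisymm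
  · rintro _ ⟨z, hz, rfl⟩
    refine Subalgebra.mem_center_iff.mpr fun b => ?_
    rw [← A.sum_mul_centralizerProj e b, Finset.sum_mul, Finset.mul_sum]
    refine Finset.sum_congr rfl fun i _ => ?_
    have hA : Commute _ (z : B) := (mem_centralizer_iff k).mp z.2 _ (e i).2
    have hC : Commute _ (z : B) := congrArg Subtype.val
      (Subalgebra.mem_center_iff.mp hz (A.centralizerProj (e.coord i) b))
    exact hA.mul_left hC
  · intro z hz
    have hzC : z ∈ centralizer k (A : Set B) :=
      (mem_centralizer_iff k).mpr fun a _ => Subalgebra.mem_center_iff.mp hz a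
    exact ⟨⟨z, hzC⟩, Subalgebra.mem_center_iff.mpr fun c =>
      Subtype.ext (Subalgebra.mem_center_iff.mp hz c), rfl⟩

theorem span_mul_comap_centralizer (J : TwoSidedIdeal B) :
    TwoSidedIdeal.span {b : B | ∃ a ∈ A, ∃ c ∈ J.comap (centralizer k (A : Set B)).val,
      b = a * (c : B)} = J := by
  apply le_antisymm
  · rw [TwoSidedIdeal.span_le]
    rintro _ ⟨a, -, c, hc, rfl⟩
    exact J.mul_mem_left _ _ ((TwoSidedIdeal.mem_comap _).mp hc)
  · intro b hb
    let e := Module.finBasis k A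
    rw [← A.sum_mul_centralizerProj e b]
    exact sum_mem fun i _ => TwoSidedIdeal.subset_span
      ⟨e i, (e i).2, _, (TwoSidedIdeal.mem_comap _).mpr (A.coe_centralizerProj_mem _ hb), rfl⟩

lemma centralizerProj_mul_mul_mem {I : TwoSidedIdeal (centralizer k (A : Set B))}
    {c : centralizer k (A : Set B)} (hc : c ∈ I) (φ : Module.Dual k A) (x y : B) :
    A.centralizerProj φ (x * c * y) ∈ I := by
  let e := Module.finBasis k A
  rw [← A.sum_mul_centralizerProj e y, Finset.mul_sum, map_sum]
  refine sum_mem fun i _ => ?_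
  have hcomm : (e i : B) * c = c * e i := (mem_centralizer_iff k).mp c.2 _ (e i).2
  have : x * c * (e i * A.centralizerProj (e.coord i) y) =
      x * e i * ↑(c * A.centralizerProj (e.coord i) y) := by
    rw [Subalgebra.coe_mul]
    simp only [mul_assoc]
    rw [← mul_assoc (c : B), ← hcomm, mul_assoc]
  rw [this, centralizerProj_mul]
  exact I.mul_mem_left _ _ (I.mul_mem_right _ _ hc)

lemma centralizerProj_mem_of_mem_span {I : TwoSidedIdeal (centralizer k (A : Set B))} {b : B}
    (hb : b ∈ TwoSidedIdeal.span {b : B | ∃ a ∈ A, ∃ c ∈ I, b = a * (c : B)})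
    (φ : Module.Dual k A) : A.centralizerProj φ b ∈ I := by
  suffices ∀ x y, A.centralizerProj φ (x * b * y) ∈ I by simpa using this 1 1
  induction hb using TwoSidedIdeal.span_induction with
  | mem _ h =>
    obtain ⟨a, -, c, hc, rfl⟩ := h
    intro x y
    rw [← mul_assoc x]
    exact A.centralizerProj_mul_mul_mem hc φ _ y
  | zero => simp
  | add _ _ _ _ hx hy => intro x y; simpa [mul_add, add_mul] using I.add_mem (hx x y) (hy x y)
  | neg _ _ hx => intro x y; simpa using I.neg_mem (hx x y)
  | left_absorb z _ _ hx => intro x y; simpa [mul_assoc] using hx (x * z) y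
  | right_absorb z _ _ hx => intro x y; simpa [mul_assoc] using hx x (z * y)

theorem comap_span_mul_centralizer (I : TwoSidedIdeal (centralizer k (A : Set B))) :
    (TwoSidedIdeal.span {b : B | ∃ a ∈ A, ∃ c ∈ I, b = a * (c : B)}).comap
      (centralizer k (A : Set B)).val = I := by
  ext c
  rw [TwoSidedIdeal.mem_comap]
  refine ⟨fun hc => ?_, fun hc =>
    TwoSidedIdeal.subset_span ⟨1, one_mem A, c, hc, (one_mul _).symm⟩⟩
  have := (FaithfulSMul.algebraMap_injective k A).nontrivial
  obtain ⟨φ, hφ⟩ := Module.Projective.exists_dual_eq_one k (one_ne_zero : (1 : A) ≠ 0)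
  simpa [centralizerProj_apply_centralizer, hφ] using A.centralizerProj_mem_of_mem_span hc φ

theorem bijective_span_mul_centralizer :
    Function.Bijective fun I : TwoSidedIdeal (centralizer k (A : Set B)) =>
      TwoSidedIdeal.span {b : B | ∃ a ∈ A, ∃ c ∈ I, b = a * (c : B)} :=
  Function.bijective_iff_has_inverse.mpr ⟨TwoSidedIdeal.comap (centralizer k (A : Set B)).val,
    A.comap_span_mul_centralizer, A.span_mul_comap_centralizer⟩

end Field

end Subalgebra

/-- Let `A` be a finite-dimensional central simple subalgebra of a `k`-algebra `B` and
let `C = C_B(A)` be its centralizer. Then (i) the multiplication map `A ⊗[k] C → B` is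
an isomorphism of `k`-algebras, (ii) `I ↦ A·I` is a bijection between two-sided ideals
of `C` and two-sided ideals of `B`, and (iii) `Z(C) = Z(B)`. -/
theorem centralizer_of_csa_subalgebra
    (k : Type*) [Field k] (B : Type*) [Ring B] [Algebra k B]
    (A : Subalgebra k B)
    [FiniteDimensional k A] [Algebra.IsCentral k A] [IsSimpleRing A] :
    Function.Bijective
      (Algebra.TensorProduct.lift A.val (Subalgebra.centralizer k (A : Set B)).val
        (fun a c => (Subalgebra.mem_centralizer_iff k |>.mp c.2 a a.2))) ∧
    Function.Bijective
      (fun I : TwoSidedIdeal (Subalgebra.centralizer k (A : Set B)) =>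
        TwoSidedIdeal.span
          {b : B | ∃ a ∈ A, ∃ c ∈ I, b = a * ((c : Subalgebra.centralizer k (A : Set B)) : B)}) ∧
    Subalgebra.map (Subalgebra.centralizer k (A : Set B)).val
        (Subalgebra.center k (Subalgebra.centralizer k (A : Set B))) =
      Subalgebra.center k B :=
  ⟨A.bijective_lift_centralizer, A.bijective_span_mul_centralizer, A.map_center_centralizer⟩
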